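/- Fix an integer n ≥ 1 and a real constant Λ. Let a, b, c be differentiable real-valued functions on an open interval I ⊆ ℝ, positive on I and satisfying a′ = (1/2)a(b² + c² − a²), b′ = (1/2)b(c² + a² − b²), c′ = (1/2)n·c(a² + b² − c² − (2Λ/n)a²b²) on I. Define ρ = 2(ab)^{1/2} and W = c²/(ab) on I. Then ρ and W are differentiable on I, ρ is strictly increasing, and for all u ∈ I: d/du(ρ^{2n+2}W) = (2n(a/b + b/a) − Λρ²)·ρ^{2n+1}·ρ′. -/

import Mathlib

/- STATEMENT 13: along a positive solution of the reduced Kähler–Einstein system,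
ρ = 2(ab)^{1/2} and W = c²/(ab) are differentiable, ρ is strictly increasing, and
d/du(ρ^{2n+2} W) = (2n(a/b + b/a) − Λρ²)·ρ^{2n+1}·ρ′. -/

theorem rho_W_equation
    (n : ℕ) (hn : 1 ≤ n) (Λ : ℝ) (I : Set ℝ) (hI : IsOpen I) (hI' : I.OrdConnected)
    (a b c : ℝ → ℝ)
    (hpos : ∀ u ∈ I, 0 < a u ∧ 0 < b u ∧ 0 < c u)
    (ha : ∀ u ∈ I, HasDerivAt a ((1/2) * a u * (b u ^ 2 + c u ^ 2 - a u ^ 2)) u)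
    (hb : ∀ u ∈ I, HasDerivAt b ((1/2) * b u * (c u ^ 2 + a u ^ 2 - b u ^ 2)) u)
    (hc : ∀ u ∈ I, HasDerivAt c ((1/2) * (n : ℝ) * c u *
      (a u ^ 2 + b u ^ 2 - c u ^ 2 - (2 * Λ / (n : ℝ)) * a u ^ 2 * b u ^ 2)) u) :
    (∀ u ∈ I, DifferentiableAt ℝ (fun v => 2 * Real.sqrt (a v * b v)) u ∧
      DifferentiableAt ℝ (fun v => c v ^ 2 / (a v * b v)) u) ∧
    StrictMonoOn (fun u => 2 * Real.sqrt (a u * b u)) I ∧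
    ∀ u ∈ I,
      deriv (fun v => (2 * Real.sqrt (a v * b v)) ^ (2*n+2) * (c v ^ 2 / (a v * b v))) u
        = (2 * (n : ℝ) * (a u / b u + b u / a u) - Λ * (2 * Real.sqrt (a u * b u)) ^ 2)
          * (2 * Real.sqrt (a u * b u)) ^ (2*n+1)
          * deriv (fun v => 2 * Real.sqrt (a v * b v)) u := by
  have key : ∀ u ∈ I, HasDerivAt (fun v => a v * b v) (a u * b u * c u ^ 2) u := by
    intro u hu
    have h := (ha u hu).mul (hb u hu)
    refine h.congr_deriv (Eq.symm ?_); ring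
  have hrho : ∀ u ∈ I, HasDerivAt (fun v => 2 * Real.sqrt (a v * b v))
      (Real.sqrt (a u * b u) * c u ^ 2) u := by
    intro u hu
    obtain ⟨hA, hB, hC⟩ := hpos u hu
    have hab : 0 < a u * b u := mul_pos hA hB
    have hs : 0 < Real.sqrt (a u * b u) := Real.sqrt_pos.2 hab
    have hs2 : Real.sqrt (a u * b u) ^ 2 = a u * b u := Real.sq_sqrt hab.le
    have h := ((key u hu).sqrt hab.ne').const_mul 2
    refine h.congr_deriv (Eq.symm ?_)
    rw [← mul_div_assoc, mul_div_mul_left _ _ (two_ne_zero), eq_div_iff hs.ne']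
    linear_combination c u ^ 2 * hs2
  have hW : ∀ u ∈ I, DifferentiableAt ℝ (fun v => c v ^ 2 / (a v * b v)) u := by
    intro u hu
    obtain ⟨hA, hB, hC⟩ := hpos u hu
    exact (((hc u hu).pow 2).div (key u hu) (mul_pos hA hB).ne').differentiableAt
  refine ⟨fun u hu => ⟨(hrho u hu).differentiableAt, hW u hu⟩, ?_, ?_⟩
  · apply strictMonoOn_of_deriv_pos (hI'.convex)
    · exact fun u hu => ((hrho u hu).differentiableAt).continuousAt.continuousWithinAt
    · intro x hx
      rw [hI.interior_eq] at hx
      rw [(hrho x hx).deriv]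
      obtain ⟨hA, hB, hC⟩ := hpos x hx
      have : 0 < Real.sqrt (a x * b x) := Real.sqrt_pos.2 (mul_pos hA hB)
      positivity
  · intro u hu
    obtain ⟨hA, hB, hC⟩ := hpos u hu
    have hab : 0 < a u * b u := mul_pos hA hB
    have hs2 : Real.sqrt (a u * b u) ^ 2 = a u * b u := Real.sq_sqrt hab.le
    rw [(hrho u hu).deriv]
    have heq : (fun v => (2 * Real.sqrt (a v * b v)) ^ (2*n+2) * (c v ^ 2 / (a v * b v)))
        =ᶠ[nhds u] (fun v => 2 ^ (2*n+2) * (a v * b v) ^ n * c v ^ 2) := by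
      filter_upwards [hI.mem_nhds hu] with v hv
      obtain ⟨hA', hB', hC'⟩ := hpos v hv
      have hab' : 0 < a v * b v := mul_pos hA' hB'
      have hs2' : Real.sqrt (a v * b v) ^ 2 = a v * b v := Real.sq_sqrt hab'.le
      have h1 : (2 * Real.sqrt (a v * b v)) ^ (2*n+2) = 2 ^ (2*n+2) * (a v * b v) ^ (n+1) := by
        rw [mul_pow]; congr 1
        rw [show 2*n+2 = 2*(n+1) by ring, pow_mul, hs2']
      rw [h1]
      field_simp
      ring
    rw [heq.deriv_eq]
    have hg : HasDerivAt (fun v => 2 ^ (2*n+2) * (a v * b v) ^ n * c v ^ 2)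
        (2 ^ (2*n+2) * ((↑n * (a u * b u) ^ (n-1) * (a u * b u * c u ^ 2)) * c u ^ 2
          + (a u * b u) ^ n * (2 * c u ^ 1 * ((1/2) * (n : ℝ) * c u *
            (a u ^ 2 + b u ^ 2 - c u ^ 2 - (2 * Λ / (n : ℝ)) * a u ^ 2 * b u ^ 2))))) u := by
      have h1 := ((key u hu).pow n).const_mul ((2:ℝ) ^ (2*n+2))
      have h2 := (hc u hu).pow 2
      have h := h1.mul h2
      refine h.congr_deriv (Eq.symm ?_)
      simp only [Pi.pow_apply]; ring
    rw [hg.deriv]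
    obtain ⟨m, rfl⟩ := Nat.exists_eq_add_of_le hn
    set S := Real.sqrt (a u * b u) with hS
    have hnn : ((1 + m : ℕ) : ℝ) ≠ 0 := by positivity
    have e2 : (2 * S) ^ (2*(1+m)+1) = 2 ^ (2*m+3) * (a u * b u) ^ (m+1) * S := by
      have h3 : S ^ (2*(1+m)+1) = (S^2)^(m+1) * S := by ring
      rw [mul_pow, h3, hs2]
      ring
    rw [e2]
    simp only [Nat.add_sub_cancel_left, show (1+m)-1 = m from by omega]
    have hs4 : S ^ 4 = (a u * b u) ^ 2 := by
      rw [show (4:ℕ) = 2*2 from rfl, pow_mul, hs2]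
    push_cast
    field_simp
    ring_nf
    rw [hs4, hs2]
    ring
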